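/- arXiv:1805.03309 — 4 statements merged into one kernel-verified Lean document; each statement's English description precedes it below -/
import Mathlib

section
/- Let f̂_1 and f̂_2 be two Vecchia approximations of f with conditioning index vectors g_1 and g_2, respectively. If g_1(i) ⊆ g_2(i) for all i = 1,…,N, then KL(f‖f̂_1) ≥ KL(f‖f̂_2). (Proposition 1, part 1.) -/
open MeasureTheory Real Finset Matrix

noncomputable section

/-- Density of the one-dimensional normal distribution `N(μ, v)` evaluated at `t`. -/
def gauss1 (μ v t : ℝ) : ℝ :=
  (Real.sqrt (2 * π * v))⁻¹ * Real.exp (-((t - μ) ^ 2) / (2 * v))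

variable {ι : Type*} [Fintype ι] [DecidableEq ι]

/-- Joint density of the multivariate normal distribution `N(μ, K)` on `ι → ℝ`. -/
def gaussDensity (μ : ι → ℝ) (K : Matrix ι ι ℝ) (x : ι → ℝ) : ℝ :=
  (Real.sqrt ((2 * π) ^ (Fintype.card ι) * K.det))⁻¹ *
    Real.exp (-(dotProduct (x - μ) (K⁻¹ *ᵥ (x - μ))) / 2)

/-- Submatrix of `K` with rows and columns in the index set `G`. -/
def subm (K : Matrix ι ι ℝ) (G : Finset ι) : Matrix G G ℝ :=
  Matrix.of fun j k => K j.1 k.1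

/-- Gaussian conditional mean `E(x i | x_G)` for `x ~ N(μ, K)`, as a function of `x`. -/
def condMean (μ : ι → ℝ) (K : Matrix ι ι ℝ) (i : ι) (G : Finset ι) (x : ι → ℝ) : ℝ :=
  μ i + dotProduct (fun j : G => K i j.1)
    ((subm K G)⁻¹ *ᵥ fun j : G => x j.1 - μ j.1)

/-- Gaussian conditional variance `Var(x i | x_G)` for `x ~ N(μ, K)`
(it does not depend on the value of `x_G`). -/
def condVar (K : Matrix ι ι ℝ) (i : ι) (G : Finset ι) : ℝ :=
  K i i - dotProduct (fun j : G => K i j.1)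
    ((subm K G)⁻¹ *ᵥ fun j : G => K j.1 i)

/-- Gaussian conditional covariance `Cov(x a, x b | x_G)` for `x ~ N(0, K)`. -/
def condCov (K : Matrix ι ι ℝ) (a b : ι) (G : Finset ι) : ℝ :=
  K a b - dotProduct (fun j : G => K a j.1)
    ((subm K G)⁻¹ *ᵥ fun j : G => K j.1 b)

/-- The exact Gaussian conditional density `f(x i | x_G)` for `x ~ N(μ, K)`. -/
def condDens (μ : ι → ℝ) (K : Matrix ι ι ℝ) (i : ι) (G : Finset ι) (x : ι → ℝ) : ℝ :=
  gauss1 (condMean μ K i G x) (condVar K i G) (x i)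

/-- The general Vecchia approximation `f̂(x) = ∏ i, f(x i | x_{g i})` of `N(μ, K)`. -/
def vecchia (μ : ι → ℝ) (K : Matrix ι ι ℝ) (g : ι → Finset ι) (x : ι → ℝ) : ℝ :=
  ∏ i, condDens μ K i (g i) x

/-- Kullback–Leibler divergence `KL(f ‖ g) = ∫ f log(f/g)` between densities on `ι → ℝ`. -/
def KLdiv (f g : (ι → ℝ) → ℝ) : ℝ :=
  ∫ x : ι → ℝ, f x * Real.log (f x / g x)

end

/-!
Both divergences are `∫ f log f - ∑ i, ∫ f log f(x i | x_{g i})`, and the `i`-th cross-entropy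
is the entropy `log √(2π e σ²)` of a normal law whose variance is the conditional variance
`σ² = condVar K i (g i)`: indeed `x i - E(x i | x_G) = r ⬝ᵥ (x - μ)` for a residual vector `r`
with `r ⬝ᵥ K r = σ²`. Enlarging `G` can only decrease `σ²`, since the residual for the smaller set
is the residual for the larger one plus a vector supported on the larger set, `K`-orthogonal to
it. The Gaussian moments `∫ f = 1` and `∫ f (w ⬝ᵥ (x - μ))² = w ⬝ᵥ K w` are computed by the
substitution `x = μ + S u` with `K = S Sᵀ`, which turns `f` into the standard normal density.
-/

section StandardGaussian

open ProbabilityTheory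

lemma gauss1_zero_one : gauss1 0 1 = gaussianPDFReal 0 1 := by
  ext t
  simp [gauss1, gaussianPDFReal]

lemma integral_gauss1_mul (φ : ℝ → ℝ) :
    ∫ t, gauss1 0 1 t * φ t = ∫ t, φ t ∂gaussianReal 0 1 := by
  rw [integral_gaussianReal_eq_integral_smul one_ne_zero, gauss1_zero_one]
  rfl

lemma integrable_gauss1_mul {φ : ℝ → ℝ} (hφ : Integrable φ (gaussianReal 0 1)) :
    Integrable (fun t => gauss1 0 1 t * φ t) := by
  rw [gaussianReal_of_var_ne_zero 0 one_ne_zero,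
    integrable_withDensity_iff_integrable_smul' (measurable_gaussianPDF 0 1)
      (ae_of_all _ fun _ => gaussianPDF_lt_top)] at hφ
  simpa [toReal_gaussianPDF, gauss1_zero_one] using hφ

variable {ι : Type*} [Fintype ι]

noncomputable def stdGaussDensity (u : ι → ℝ) : ℝ := ∏ i, gauss1 0 1 (u i)

lemma integral_stdGaussDensity_mul_prod (φ : ι → ℝ → ℝ) :
    ∫ u, stdGaussDensity u * ∏ i, φ i (u i) = ∏ i, ∫ t, φ i t ∂gaussianReal 0 1 := by
  simp_rw [stdGaussDensity, ← prod_mul_distrib, ← integral_gauss1_mul]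
  rw [volume_pi, integral_fintype_prod_eq_prod (fun i t => gauss1 0 1 t * φ i t)]

lemma integrable_stdGaussDensity_mul_prod {φ : ι → ℝ → ℝ}
    (hφ : ∀ i, Integrable (φ i) (gaussianReal 0 1)) :
    Integrable (fun u => stdGaussDensity u * ∏ i, φ i (u i)) := by
  simp_rw [stdGaussDensity, ← prod_mul_distrib]
  rw [volume_pi]
  exact .fintype_prod fun i => integrable_gauss1_mul (hφ i)

lemma integrable_stdGaussDensity : Integrable (stdGaussDensity (ι := ι)) := by
  simpa using integrable_stdGaussDensity_mul_prod (ι := ι) (φ := fun _ _ => 1)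
    fun _ => integrable_const 1

lemma integral_stdGaussDensity : ∫ u, stdGaussDensity (ι := ι) u = 1 := by
  simpa using integral_stdGaussDensity_mul_prod (ι := ι) (fun _ _ => 1)

lemma stdGaussDensity_mul_dotProduct_sq (a u : ι → ℝ) :
    stdGaussDensity u * (a ⬝ᵥ u) ^ 2
      = ∑ j, ∑ k, a j * a k * (stdGaussDensity u * (u j * u k)) := by
  simp_rw [sq, dotProduct, sum_mul_sum, mul_sum]
  exact sum_congr rfl fun j _ => sum_congr rfl fun k _ => by ring

variable [DecidableEq ι]

/-- `u j * u k` as a product of one-variable factors, to which Fubini applies. -/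
lemma apply_mul_apply_eq_prod (j k : ι) (u : ι → ℝ) :
    u j * u k = ∏ i, (if j = i then u i else 1) * (if k = i then u i else 1) := by
  rw [prod_mul_distrib, prod_ite_eq, prod_ite_eq]
  simp

lemma integrable_stdGaussDensity_mul_mul (j k : ι) :
    Integrable (fun u => stdGaussDensity u * (u j * u k)) := by
  simp_rw [apply_mul_apply_eq_prod j k]
  refine integrable_stdGaussDensity_mul_prod
    (φ := fun i t => (if j = i then t else 1) * (if k = i then t else 1)) fun i => ?_
  have h1 : Integrable (fun t : ℝ => t) (gaussianReal 0 1) := IsGaussian.integrable_id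
  have h2 : Integrable (fun t : ℝ => t * t) (gaussianReal 0 1) := by
    simpa [sq] using (memLp_id_gaussianReal (μ := 0) (v := 1) 2).integrable_sq
  split_ifs <;> simp [h1, h2]

lemma integral_stdGaussDensity_mul_mul (j k : ι) :
    ∫ u, stdGaussDensity u * (u j * u k) = if j = k then 1 else 0 := by
  simp_rw [apply_mul_apply_eq_prod j k]
  rw [integral_stdGaussDensity_mul_prod
    (fun i t => (if j = i then t else 1) * (if k = i then t else 1))]
  have h1 : ∫ t, t ∂gaussianReal 0 1 = 0 := integral_id_gaussianReal
  have h2 : ∫ t, t * t ∂gaussianReal 0 1 = 1 := by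
    have := variance_fun_id_gaussianReal (μ := 0) (v := 1)
    rw [variance_of_integral_eq_zero measurable_id'.aemeasurable h1] at this
    simpa [sq] using this
  split_ifs with hjk
  · subst hjk
    refine prod_eq_one fun i _ => ?_
    split_ifs <;> simp [h2]
  · exact prod_eq_zero (mem_univ j) (by simp [Ne.symm hjk, h1])

lemma integrable_stdGaussDensity_mul_dotProduct_sq (a : ι → ℝ) :
    Integrable (fun u => stdGaussDensity u * (a ⬝ᵥ u) ^ 2) := by
  simp_rw [stdGaussDensity_mul_dotProduct_sq]
  exact integrable_finsetSum _ fun j _ => integrable_finsetSum _ fun k _ =>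
    (integrable_stdGaussDensity_mul_mul j k).const_mul _

lemma integral_stdGaussDensity_mul_dotProduct_sq (a : ι → ℝ) :
    ∫ u, stdGaussDensity u * (a ⬝ᵥ u) ^ 2 = a ⬝ᵥ a := by
  simp_rw [stdGaussDensity_mul_dotProduct_sq]
  rw [integral_finsetSum _ fun j _ => integrable_finsetSum _ fun k _ =>
    (integrable_stdGaussDensity_mul_mul j k).const_mul _]
  refine sum_congr rfl fun j _ => ?_
  rw [integral_finsetSum _ fun k _ => (integrable_stdGaussDensity_mul_mul j k).const_mul _]
  simp [integral_const_mul, integral_stdGaussDensity_mul_mul]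

lemma integrable_stdGaussDensity_mul_dotProduct_self :
    Integrable (fun u : ι → ℝ => stdGaussDensity u * (u ⬝ᵥ u)) := by
  simp_rw [dotProduct, mul_sum]
  exact integrable_finsetSum _ fun j _ => integrable_stdGaussDensity_mul_mul j j

end StandardGaussian

section AffineChange

variable {ι : Type*} [Fintype ι] [DecidableEq ι] {S : Matrix ι ι ℝ}

lemma map_volume_add_mulVec (c : ι → ℝ) (hS : S.det ≠ 0) :
    (volume : Measure (ι → ℝ)).map (fun u => c + S *ᵥ u)
      = ENNReal.ofReal |S.det|⁻¹ • volume := by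
  have hlin : Continuous (Matrix.toLin' S) := LinearMap.continuous_on_pi _
  rw [show (fun u => c + S *ᵥ u) = (c + ·) ∘ Matrix.toLin' S from rfl,
    ← Measure.map_map (measurable_const_add c) hlin.measurable,
    Real.map_matrix_volume_pi_eq_smul_volume_pi hS, Measure.map_smul,
    map_add_left_eq_self, abs_inv]

lemma measurableEmbedding_add_mulVec (c : ι → ℝ) (hS : S.det ≠ 0) :
    MeasurableEmbedding (fun u => c + S *ᵥ u) :=
  let e := ((Matrix.toLin' S).equivOfDetNeZero (by rwa [LinearMap.det_toLin']))
  (e.toContinuousLinearEquiv.toHomeomorph.trans (Homeomorph.addLeft c)).measurableEmbedding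

lemma integral_comp_add_mulVec (c : ι → ℝ) (hS : S.det ≠ 0) (F : (ι → ℝ) → ℝ) :
    ∫ u, F (c + S *ᵥ u) = |S.det|⁻¹ * ∫ x, F x := by
  rw [← (measurableEmbedding_add_mulVec c hS).integral_map, map_volume_add_mulVec c hS,
    integral_smul_measure, ENNReal.toReal_ofReal (by positivity), smul_eq_mul]

lemma integrable_comp_add_mulVec_iff (c : ι → ℝ) (hS : S.det ≠ 0) {F : (ι → ℝ) → ℝ} :
    Integrable (fun u => F (c + S *ᵥ u)) ↔ Integrable F := by
  rw [← Function.comp_def, ← (measurableEmbedding_add_mulVec c hS).integrable_map_iff,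
    map_volume_add_mulVec c hS,
    integrable_smul_measure (by simpa using hS) ENNReal.ofReal_ne_top]

end AffineChange

section GaussianTransfer

variable {ι : Type*} [Fintype ι] [DecidableEq ι] {K S : Matrix ι ι ℝ}

open scoped MatrixOrder in
lemma exists_mul_transpose_eq_of_posSemidef (hK : K.PosSemidef) :
    ∃ S : Matrix ι ι ℝ, S * Sᵀ = K := by
  have hsqrt : (CFC.sqrt K)ᵀ = CFC.sqrt K :=
    (isHermitian_iff_isSymm.mp (CFC.sqrt_nonneg K).posSemidef.isHermitian).eq
  exact ⟨CFC.sqrt K, by rw [hsqrt, CFC.sqrt_mul_sqrt_self K hK.nonneg]⟩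

lemma det_ne_zero_of_mul_transpose_eq (hK : K.PosDef) (hS : S * Sᵀ = K) : S.det ≠ 0 :=
  fun h => hK.det_pos.ne' (by rw [← hS, det_mul, h, zero_mul])

lemma mulVec_dotProduct_inv_mul_transpose_mulVec (hS : IsUnit S.det) (u : ι → ℝ) :
    (S *ᵥ u) ⬝ᵥ ((S * Sᵀ)⁻¹ *ᵥ (S *ᵥ u)) = u ⬝ᵥ u := by
  rw [Matrix.mul_inv_rev, mulVec_mulVec, Matrix.mul_assoc, nonsing_inv_mul _ hS,
    Matrix.mul_one, dotProduct_comm, dotProduct_mulVec, ← mulVec_transpose, mulVec_mulVec,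
    mul_nonsing_inv _ (by simpa using hS), one_mulVec]

lemma gaussDensity_add_mulVec (hK : K.PosDef) (hS : S * Sᵀ = K) (μ u : ι → ℝ) :
    gaussDensity μ K (μ + S *ᵥ u) = |S.det|⁻¹ * stdGaussDensity u := by
  have hS₀ : IsUnit S.det := (det_ne_zero_of_mul_transpose_eq hK hS).isUnit
  have hdet : √((2 * π) ^ Fintype.card ι * K.det) = √(2 * π) ^ Fintype.card ι * |S.det| := by
    rw [← hS, det_mul, det_transpose, ← sq, Real.sqrt_mul (by positivity), Real.sqrt_sq_eq_abs,
      ← Real.sqrt_sq (by positivity : 0 ≤ √(2 * π) ^ Fintype.card ι), ← pow_right_comm,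
      Real.sq_sqrt (by positivity)]
  have hexp : rexp (-(u ⬝ᵥ u) / 2) = ∏ i, rexp (-(u i - 0) ^ 2 / (2 * 1)) := by
    rw [← Real.exp_sum]
    simp [dotProduct, ← sq, sum_div, neg_div]
  rw [gaussDensity, add_sub_cancel_left, ← hS, mulVec_dotProduct_inv_mul_transpose_mulVec hS₀,
    hS, hdet, hexp, stdGaussDensity]
  simp only [gauss1, prod_mul_distrib, prod_const, card_univ, mul_one]
  rw [mul_inv, inv_pow]
  ring

variable (μ : ι → ℝ)

lemma integral_gaussDensity_mul (hK : K.PosDef) (hS : S * Sᵀ = K) (h : (ι → ℝ) → ℝ) :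
    ∫ x, gaussDensity μ K x * h x = ∫ u, stdGaussDensity u * h (μ + S *ᵥ u) := by
  have hS₀ := det_ne_zero_of_mul_transpose_eq hK hS
  rw [← mul_right_inj' (inv_ne_zero (abs_ne_zero.mpr hS₀)),
    ← integral_comp_add_mulVec μ hS₀, ← integral_const_mul]
  simp_rw [gaussDensity_add_mulVec hK hS, mul_assoc]

lemma integrable_gaussDensity_mul_iff (hK : K.PosDef) (hS : S * Sᵀ = K) (h : (ι → ℝ) → ℝ) :
    Integrable (fun x => gaussDensity μ K x * h x)
      ↔ Integrable (fun u => stdGaussDensity u * h (μ + S *ᵥ u)) := by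
  have hS₀ := det_ne_zero_of_mul_transpose_eq hK hS
  rw [← integrable_comp_add_mulVec_iff μ hS₀]
  simp_rw [gaussDensity_add_mulVec hK hS, mul_assoc]
  exact integrable_const_mul_iff (inv_ne_zero (abs_ne_zero.mpr hS₀)).isUnit _

end GaussianTransfer

section GaussianMoments

variable {ι : Type*} [Fintype ι] [DecidableEq ι] {K : Matrix ι ι ℝ} (hK : K.PosDef) (μ : ι → ℝ)
include hK

lemma integrable_gaussDensity : Integrable (gaussDensity μ K) := by
  obtain ⟨S, hS⟩ := exists_mul_transpose_eq_of_posSemidef hK.posSemidef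
  simpa using (integrable_gaussDensity_mul_iff μ hK hS fun _ => 1).mpr (by
    simpa using integrable_stdGaussDensity)

lemma integral_gaussDensity : ∫ x, gaussDensity μ K x = 1 := by
  obtain ⟨S, hS⟩ := exists_mul_transpose_eq_of_posSemidef hK.posSemidef
  simpa [integral_stdGaussDensity] using integral_gaussDensity_mul μ hK hS fun _ => 1

lemma integrable_gaussDensity_mul_dotProduct_sq (w : ι → ℝ) :
    Integrable (fun x => gaussDensity μ K x * (w ⬝ᵥ (x - μ)) ^ 2) := by
  obtain ⟨S, hS⟩ := exists_mul_transpose_eq_of_posSemidef hK.posSemidef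
  rw [integrable_gaussDensity_mul_iff μ hK hS]
  simpa [dotProduct_mulVec] using integrable_stdGaussDensity_mul_dotProduct_sq (w ᵥ* S)

lemma integral_gaussDensity_mul_dotProduct_sq (w : ι → ℝ) :
    ∫ x, gaussDensity μ K x * (w ⬝ᵥ (x - μ)) ^ 2 = w ⬝ᵥ (K *ᵥ w) := by
  obtain ⟨S, hS⟩ := exists_mul_transpose_eq_of_posSemidef hK.posSemidef
  rw [integral_gaussDensity_mul μ hK hS]
  simp_rw [add_sub_cancel_left, dotProduct_mulVec, integral_stdGaussDensity_mul_dotProduct_sq,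
    ← dotProduct_mulVec, ← hS, ← mulVec_mulVec, mulVec_transpose]

lemma integrable_gaussDensity_mul_quadForm :
    Integrable (fun x => gaussDensity μ K x * ((x - μ) ⬝ᵥ (K⁻¹ *ᵥ (x - μ)))) := by
  obtain ⟨S, hS⟩ := exists_mul_transpose_eq_of_posSemidef hK.posSemidef
  rw [integrable_gaussDensity_mul_iff μ hK hS]
  simp_rw [add_sub_cancel_left, ← hS, mulVec_dotProduct_inv_mul_transpose_mulVec
    (det_ne_zero_of_mul_transpose_eq hK hS).isUnit]
  exact integrable_stdGaussDensity_mul_dotProduct_self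

end GaussianMoments

section GaussianConditioning

variable {ι : Type*}

lemma subm_posDef {K : Matrix ι ι ℝ} (hK : K.PosDef) (G : Finset ι) : (subm K G).PosDef :=
  hK.submatrix Subtype.val_injective

variable [DecidableEq ι]

def extendByZero (G : Finset ι) (v : G → ℝ) : ι → ℝ :=
  fun j => if h : j ∈ G then v ⟨j, h⟩ else 0

lemma extendByZero_of_notMem {G : Finset ι} (v : G → ℝ) {j : ι} (hj : j ∉ G) :
    extendByZero G v j = 0 :=
  dif_neg hj

variable [Fintype ι]

lemma dotProduct_extendByZero (G : Finset ι) (F : ι → ℝ) (v : G → ℝ) :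
    F ⬝ᵥ extendByZero G v = (fun j : G => F j) ⬝ᵥ v := by
  simp only [dotProduct, extendByZero, mul_dite, mul_zero]
  exact (sum_attach_eq_sum_dite G fun j => F j * v j).symm

/-- Coefficients of the regression residual of `x i` on `x_G`, see `sub_condMean`. -/
noncomputable def condResidual (K : Matrix ι ι ℝ) (i : ι) (G : Finset ι) : ι → ℝ :=
  Pi.single i 1 - extendByZero G ((subm K G)⁻¹ *ᵥ fun j : G => K j i)

variable {K : Matrix ι ι ℝ} (hK : K.PosDef)
include hK

lemma mulVec_condResidual_of_mem (i : ι) {G : Finset ι} {j : ι} (hj : j ∈ G) :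
    (K *ᵥ condResidual K i G) j = 0 := by
  have hunit : IsUnit (subm K G).det := (subm_posDef hK G).det_pos.ne'.isUnit
  have hsolve : subm K G *ᵥ ((subm K G)⁻¹ *ᵥ fun k : G => K k i) = fun k : G => K k i := by
    rw [mulVec_mulVec, mul_nonsing_inv _ hunit, one_mulVec]
  have hrow : (K *ᵥ extendByZero G ((subm K G)⁻¹ *ᵥ fun k : G => K k i)) j
      = (subm K G *ᵥ ((subm K G)⁻¹ *ᵥ fun k : G => K k i)) ⟨j, hj⟩ :=
    dotProduct_extendByZero G _ _
  rw [condResidual, mulVec_sub, Pi.sub_apply, mulVec_single_one, hrow, hsolve]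
  simp

lemma dotProduct_mulVec_condResidual_eq_zero (i : ι) {G : Finset ι} {u : ι → ℝ}
    (hu : ∀ j ∉ G, u j = 0) : u ⬝ᵥ (K *ᵥ condResidual K i G) = 0 := by
  refine sum_eq_zero fun j _ => ?_
  by_cases hj : j ∈ G
  · rw [mulVec_condResidual_of_mem hK i hj, mul_zero]
  · rw [hu j hj, zero_mul]

lemma condVar_eq_dotProduct_mulVec_condResidual (i : ι) (G : Finset ι) :
    condVar K i G = condResidual K i G ⬝ᵥ (K *ᵥ condResidual K i G) := by
  have hG := dotProduct_mulVec_condResidual_eq_zero hK i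
    (u := extendByZero G ((subm K G)⁻¹ *ᵥ fun j : G => K j i)) fun j => extendByZero_of_notMem _
  conv_rhs => enter [1]; rw [condResidual]
  rw [sub_dotProduct, hG, sub_zero, single_one_dotProduct, condResidual, mulVec_sub,
    Pi.sub_apply, mulVec_single_one]
  exact congrArg (K i i - ·) (dotProduct_extendByZero G _ _).symm

lemma sub_condMean (μ : ι → ℝ) (i : ι) (G : Finset ι) (x : ι → ℝ) :
    x i - condMean μ K i G x = condResidual K i G ⬝ᵥ (x - μ) := by
  have hsymm : (subm K G)⁻¹ᵀ = (subm K G)⁻¹ := by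
    rw [transpose_nonsing_inv, (isHermitian_iff_isSymm.mp (subm_posDef hK G).isHermitian).eq]
  have hrow : (fun j : G => K i j) = fun j : G => K j i := by
    ext j
    exact (isHermitian_iff_isSymm.mp hK.isHermitian).apply j i
  rw [condMean, condResidual, sub_dotProduct, single_one_dotProduct,
    dotProduct_comm (extendByZero _ _), dotProduct_extendByZero, hrow, dotProduct_mulVec,
    ← mulVec_transpose, hsymm, dotProduct_comm]
  simp only [Pi.sub_apply]
  ring

lemma condVar_pos {i : ι} {G : Finset ι} (hi : i ∉ G) : 0 < condVar K i G := by
  rw [condVar_eq_dotProduct_mulVec_condResidual hK]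
  refine hK.dotProduct_mulVec_pos fun h => ?_
  have := congrFun h i
  simp [extendByZero_of_notMem _ hi] at this

lemma condVar_le_of_subset (i : ι) {G₁ G₂ : Finset ι} (h : G₁ ⊆ G₂) :
    condVar K i G₂ ≤ condVar K i G₁ := by
  obtain ⟨u, hu, hr⟩ : ∃ u : ι → ℝ,
      (∀ j ∉ G₂, u j = 0) ∧ condResidual K i G₁ = condResidual K i G₂ + u := by
    refine ⟨_, fun j hj => ?_, (add_sub_cancel _ _).symm⟩
    simp [condResidual, extendByZero_of_notMem _ hj,
      extendByZero_of_notMem _ fun h' => hj (h h')]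
  have hsymm : condResidual K i G₂ ⬝ᵥ (K *ᵥ u) = u ⬝ᵥ (K *ᵥ condResidual K i G₂) := by
    rw [dotProduct_mulVec, ← mulVec_transpose, (isHermitian_iff_isSymm.mp hK.isHermitian).eq,
      dotProduct_comm]
  rw [condVar_eq_dotProduct_mulVec_condResidual hK i G₁,
    condVar_eq_dotProduct_mulVec_condResidual hK i G₂, hr, mulVec_add, add_dotProduct,
    dotProduct_add, dotProduct_add, hsymm, dotProduct_mulVec_condResidual_eq_zero hK i hu]
  have hpsd : 0 ≤ u ⬝ᵥ (K *ᵥ u) := by simpa using hK.posSemidef.dotProduct_mulVec_nonneg u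
  linarith

end GaussianConditioning

section KullbackLeibler

lemma log_gauss1 {m v : ℝ} (hv : 0 < v) (t : ℝ) :
    Real.log (gauss1 m v t) = -Real.log √(2 * π * v) - (t - m) ^ 2 / (2 * v) := by
  rw [gauss1, Real.log_mul (by positivity) (Real.exp_ne_zero _), Real.log_exp, Real.log_inv,
    neg_div]
  ring

variable {ι : Type*} [Fintype ι] [DecidableEq ι] {K : Matrix ι ι ℝ} (hK : K.PosDef)
  (μ : ι → ℝ)
include hK

lemma gaussDensity_pos (x : ι → ℝ) : 0 < gaussDensity μ K x := by
  have := hK.det_pos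
  unfold gaussDensity
  positivity

lemma condDens_pos {i : ι} {G : Finset ι} (hi : i ∉ G) (x : ι → ℝ) : 0 < condDens μ K i G x := by
  have := condVar_pos hK hi
  unfold condDens gauss1
  positivity

lemma gaussDensity_mul_log_condDens {i : ι} {G : Finset ι} (hi : i ∉ G) (x : ι → ℝ) :
    gaussDensity μ K x * Real.log (condDens μ K i G x)
      = -Real.log √(2 * π * condVar K i G) * gaussDensity μ K x
        - (2 * condVar K i G)⁻¹ * (gaussDensity μ K x * (condResidual K i G ⬝ᵥ (x - μ)) ^ 2) := by
  rw [condDens, log_gauss1 (condVar_pos hK hi), ← sub_condMean hK]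
  ring

lemma integrable_gaussDensity_mul_log_condDens {i : ι} {G : Finset ι} (hi : i ∉ G) :
    Integrable (fun x => gaussDensity μ K x * Real.log (condDens μ K i G x)) := by
  simp_rw [gaussDensity_mul_log_condDens hK μ hi]
  exact ((integrable_gaussDensity hK μ).const_mul _).sub
    ((integrable_gaussDensity_mul_dotProduct_sq hK μ _).const_mul _)

lemma integral_gaussDensity_mul_log_condDens {i : ι} {G : Finset ι} (hi : i ∉ G) :
    ∫ x, gaussDensity μ K x * Real.log (condDens μ K i G x)
      = -(Real.log √(2 * π * condVar K i G) + 1 / 2) := by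
  simp_rw [gaussDensity_mul_log_condDens hK μ hi]
  rw [integral_sub ((integrable_gaussDensity hK μ).const_mul _)
      ((integrable_gaussDensity_mul_dotProduct_sq hK μ _).const_mul _),
    integral_const_mul, integral_const_mul, integral_gaussDensity hK μ,
    integral_gaussDensity_mul_dotProduct_sq hK μ, ← condVar_eq_dotProduct_mulVec_condResidual hK,
    mul_one]
  field_simp [(condVar_pos hK hi).ne']
  ring

lemma integrable_gaussDensity_mul_log_gaussDensity :
    Integrable (fun x => gaussDensity μ K x * Real.log (gaussDensity μ K x)) := by
  have hdet := hK.det_pos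
  have hlog : ∀ x, gaussDensity μ K x * Real.log (gaussDensity μ K x)
      = Real.log (√((2 * π) ^ Fintype.card ι * K.det))⁻¹ * gaussDensity μ K x
        - 2⁻¹ * (gaussDensity μ K x * ((x - μ) ⬝ᵥ (K⁻¹ *ᵥ (x - μ)))) := fun x => by
    conv_lhs => enter [2, 1]; rw [gaussDensity]
    rw [Real.log_mul (by positivity) (Real.exp_ne_zero _), Real.log_exp]
    ring
  simp_rw [hlog]
  exact ((integrable_gaussDensity hK μ).const_mul _).sub
    ((integrable_gaussDensity_mul_quadForm hK μ).const_mul _)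

lemma KLdiv_gaussDensity_vecchia {g : ι → Finset ι} (hg : ∀ i, i ∉ g i) :
    KLdiv (gaussDensity μ K) (vecchia μ K g)
      = (∫ x, gaussDensity μ K x * Real.log (gaussDensity μ K x))
        + ∑ i, (Real.log √(2 * π * condVar K i (g i)) + 1 / 2) := by
  have hsplit : ∀ x, gaussDensity μ K x * Real.log (gaussDensity μ K x / vecchia μ K g x)
      = gaussDensity μ K x * Real.log (gaussDensity μ K x)
        - ∑ i, gaussDensity μ K x * Real.log (condDens μ K i (g i) x) := fun x => by
    rw [vecchia, Real.log_div (gaussDensity_pos hK μ x).ne'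
        (prod_pos fun i _ => condDens_pos hK μ (hg i) x).ne',
      Real.log_prod fun i _ => (condDens_pos hK μ (hg i) x).ne', mul_sub, mul_sum]
  have hint := fun i (_ : i ∈ univ) => integrable_gaussDensity_mul_log_condDens hK μ (hg i)
  rw [KLdiv]
  simp_rw [hsplit]
  rw [integral_sub (integrable_gaussDensity_mul_log_gaussDensity hK μ)
      (integrable_finsetSum _ hint), integral_finsetSum _ hint]
  simp only [integral_gaussDensity_mul_log_condDens hK μ (hg _), sum_neg_distrib, sub_neg_eq_add]

end KullbackLeibler

/-- **Proposition 1, part 1.** If the conditioning vectors of one Vecchia approximation are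
contained in those of another, then its KL divergence from the exact Gaussian density is at
least as large. -/
theorem kl_antitone_in_conditioning_sets
    {N : ℕ} (μ : Fin N → ℝ) (K : Matrix (Fin N) (Fin N) ℝ) (hK : K.PosDef)
    (g₁ g₂ : Fin N → Finset (Fin N))
    (hg₁ : ∀ i, g₁ i ⊆ Finset.Iio i) (hg₂ : ∀ i, g₂ i ⊆ Finset.Iio i)
    (h : ∀ i, g₁ i ⊆ g₂ i) :
    KLdiv (gaussDensity μ K) (vecchia μ K g₂) ≤ KLdiv (gaussDensity μ K) (vecchia μ K g₁) := by
  have hnotMem {g : Fin N → Finset (Fin N)} (hg : ∀ i, g i ⊆ Finset.Iio i) (i : Fin N) :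
      i ∉ g i := fun hi => lt_irrefl i (Finset.mem_Iio.mp (hg i hi))
  rw [KLdiv_gaussDensity_vecchia hK μ (hnotMem hg₁),
    KLdiv_gaussDensity_vecchia hK μ (hnotMem hg₂)]
  gcongr with i
  · have := condVar_pos hK (hnotMem hg₂ i)
    positivity
  · exact condVar_le_of_subset hK i (h i)
end

section
/- In the latent Gaussian model, for each index j, the response z_j is conditionally independent of all other components of the joint Gaussian vector (y_1,…,y_n, z_1,…,z_n) given y_j. Consequently, for any component w of (y, z) with w ≠ z_j and any collection G of components of (y, z) not containing w, the conditional distribution of w given (x_G, y_j) coincides with the conditional distribution of w given (x_G, y_j, z_j); in particular Var(w | x_G, y_j) = Var(w | x_G, y_j, z_j). (Conditioning on a latent variable y_j is equivalent to conditioning on both y_j and its response z_j; this is the key lemma in the proof of Proposition 2.) -/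
open MeasureTheory Real Finset Matrix

noncomputable section

variable {ι : Type*} [Fintype ι] [DecidableEq ι]

/-- Covariance matrix of the joint Gaussian vector `(y, z)` in the latent model
`y ~ N(0, K)`, `z = y + ε`, `ε ~ N(0, D)` independent of `y`: `Sum.inl i` indexes `yᵢ` and
`Sum.inr i` indexes `zᵢ`. -/
def latentCov {n : ℕ} (K D : Matrix (Fin n) (Fin n) ℝ) :
    Matrix (Fin n ⊕ Fin n) (Fin n ⊕ Fin n) ℝ :=
  Matrix.fromBlocks K K K (K + D)

/-!
The coefficients `β` of the regression of `x w` on `x_G` are the unique solution of the normal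
equations `∑ k ∈ G, β k * S k v = S w v` (`v ∈ G`). In the latent model the column of `z j` in
the joint covariance `S` agrees with the column of `y j` off the diagonal entry of `z j`. Hence,
when `y j ∈ G` and `w ≠ z j`, the coefficients on `G`, extended by `0` at `z j`, also solve the
normal equations on `G ∪ {z j}`: `z j` gets weight zero, and the conditional mean and variance
do not change. For the same reason `Cov(z j, w) = Cov(y j, w)`, so the partial covariance of
`z j` and `w` given `y j` vanishes. All the systems are uniquely solvable because `S` is positive
definite, being the covariance of the image of `(y, ε)` under an invertible map.
-/

section Regression

variable {κ : Type*} [DecidableEq κ]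

/-- The coefficients of `E(x w | x_G)` as a linear function of `x_G`, extended by zero off `G`. -/
def regCoef (S : Matrix κ κ ℝ) (w : κ) (G : Finset κ) (k : κ) : ℝ :=
  if h : k ∈ G then ((fun v : G => S w v) ᵥ* (subm S G)⁻¹) ⟨k, h⟩ else 0

lemma regCoef_of_notMem {S : Matrix κ κ ℝ} {w : κ} {G : Finset κ} {k : κ} (hk : k ∉ G) :
    regCoef S w G k = 0 :=
  dif_neg hk

lemma sum_regCoef_mul (S : Matrix κ κ ℝ) (w : κ) (G : Finset κ) (f : κ → ℝ) :
    ∑ k ∈ G, regCoef S w G k * f k =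
      ((fun v : G => S w v) ᵥ* (subm S G)⁻¹) ⬝ᵥ fun v : G => f v := by
  rw [← Finset.sum_coe_sort]
  simp [regCoef, dotProduct]

lemma condVar_eq_sub_sum_regCoef (S : Matrix κ κ ℝ) (w : κ) (G : Finset κ) :
    condVar S w G = S w w - ∑ k ∈ G, regCoef S w G k * S k w := by
  rw [condVar, dotProduct_mulVec, sum_regCoef_mul]

lemma condMean_zero_eq_sum_regCoef (S : Matrix κ κ ℝ) (w : κ) (G : Finset κ) (x : κ → ℝ) :
    condMean 0 S w G x = ∑ k ∈ G, regCoef S w G k * x k := by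
  simp only [condMean, Pi.zero_apply, sub_zero, zero_add, dotProduct_mulVec, sum_regCoef_mul]

lemma sum_regCoef_mul_apply {S : Matrix κ κ ℝ} {G : Finset κ} (hG : IsUnit (subm S G).det)
    (w : κ) {v : κ} (hv : v ∈ G) :
    ∑ k ∈ G, regCoef S w G k * S k v = S w v := by
  have := congrFun (vecMul_vecMul (fun v : G => S w v) (subm S G)⁻¹ (subm S G)) ⟨v, hv⟩
  rw [nonsing_inv_mul _ hG, vecMul_one] at this
  rw [sum_regCoef_mul, ← this]
  rfl

lemma regCoef_eq_of_sum_mul_apply {S : Matrix κ κ ℝ} {G : Finset κ} (hG : IsUnit (subm S G).det)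
    {w : κ} {β : κ → ℝ} (hβ : ∀ k ∉ G, β k = 0)
    (hnormal : ∀ v ∈ G, ∑ k ∈ G, β k * S k v = S w v) :
    regCoef S w G = β := by
  set c : G → ℝ := fun v => β v
  have hc : c ᵥ* subm S G = fun v : G => S w v := by
    ext v
    rw [← hnormal v v.2, ← Finset.sum_coe_sort]
    rfl
  funext k
  by_cases hk : k ∈ G
  · have : c = (fun v : G => S w v) ᵥ* (subm S G)⁻¹ := by
      rw [← hc, vecMul_vecMul, mul_nonsing_inv _ hG, vecMul_one]
    simp [regCoef, hk, ← this, c]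
  · rw [regCoef_of_notMem hk, hβ k hk]

lemma regCoef_insert_eq {S : Matrix κ κ ℝ} {G : Finset κ} {a t w : κ}
    (hins : IsUnit (subm S (insert a G)).det) (hG : IsUnit (subm S G).det) (ha : a ∉ G)
    (ht : t ∈ G) (hcol : ∀ v ≠ a, S v a = S v t) (hw : w ≠ a) :
    regCoef S w (insert a G) = regCoef S w G := by
  refine regCoef_eq_of_sum_mul_apply hins (fun k hk => regCoef_of_notMem fun h => hk
    (mem_insert_of_mem h)) fun v hv => ?_
  rw [sum_insert ha, regCoef_of_notMem ha, zero_mul, zero_add]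
  rcases mem_insert.mp hv with rfl | hv
  · calc ∑ k ∈ G, regCoef S w G k * S k v
        = ∑ k ∈ G, regCoef S w G k * S k t :=
          sum_congr rfl fun k hk => by rw [hcol k (ne_of_mem_of_not_mem hk ha)]
      _ = S w t := sum_regCoef_mul_apply hG w ht
      _ = S w v := (hcol w hw).symm
  · exact sum_regCoef_mul_apply hG w hv

lemma sum_regCoef_insert_mul {S : Matrix κ κ ℝ} {G : Finset κ} {a t w : κ}
    (hins : IsUnit (subm S (insert a G)).det) (hG : IsUnit (subm S G).det)
    (ht : t ∈ G) (hcol : ∀ v ≠ a, S v a = S v t) (hw : w ≠ a) (f : κ → ℝ) :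
    ∑ k ∈ insert a G, regCoef S w (insert a G) k * f k = ∑ k ∈ G, regCoef S w G k * f k := by
  by_cases ha : a ∈ G
  · rw [insert_eq_of_mem ha]
  · rw [regCoef_insert_eq hins hG ha ht hcol hw, sum_insert ha, regCoef_of_notMem ha, zero_mul,
      zero_add]

lemma Matrix.PosDef.isUnit_det_subm {S : Matrix κ κ ℝ} (hS : S.PosDef) (G : Finset κ) :
    IsUnit (subm S G).det :=
  (isUnit_iff_isUnit_det _).mp (hS.submatrix Subtype.val_injective).isUnit

lemma condVar_insert_eq {S : Matrix κ κ ℝ} (hS : S.PosDef) {G : Finset κ} {a t w : κ}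
    (ht : t ∈ G) (hcol : ∀ v ≠ a, S v a = S v t) (hw : w ≠ a) :
    condVar S w (insert a G) = condVar S w G := by
  simp only [condVar_eq_sub_sum_regCoef,
    sum_regCoef_insert_mul (hS.isUnit_det_subm _) (hS.isUnit_det_subm G) ht hcol hw]

lemma condMean_insert_eq {S : Matrix κ κ ℝ} (hS : S.PosDef) {G : Finset κ} {a t w : κ}
    (ht : t ∈ G) (hcol : ∀ v ≠ a, S v a = S v t) (hw : w ≠ a) (x : κ → ℝ) :
    condMean 0 S w (insert a G) x = condMean 0 S w G x := by
  simp only [condMean_zero_eq_sum_regCoef,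
    sum_regCoef_insert_mul (hS.isUnit_det_subm _) (hS.isUnit_det_subm G) ht hcol hw]

lemma condCov_singleton (S : Matrix κ κ ℝ) (a b t : κ) :
    condCov S a b {t} = S a b - S a t * (S t t)⁻¹ * S t b := by
  simp [condCov, subm, dotProduct, mulVec, mul_assoc]

end Regression

lemma Matrix.PosDef.fromBlocks_zero {m n : Type*} [Fintype m] [Fintype n] {A : Matrix m m ℝ}
    {B : Matrix n n ℝ} (hA : A.PosDef) (hB : B.PosDef) : (fromBlocks A 0 0 B).PosDef := by
  refine posDef_iff_dotProduct_mulVec.mpr ⟨hA.1.fromBlocks (by simp) hB.1, fun x hx => ?_⟩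
  have hquad : star x ⬝ᵥ fromBlocks A 0 0 B *ᵥ x =
      star (x ∘ Sum.inl) ⬝ᵥ A *ᵥ (x ∘ Sum.inl) + star (x ∘ Sum.inr) ⬝ᵥ B *ᵥ (x ∘ Sum.inr) := by
    conv_lhs => rw [← Sum.elim_comp_inl_inr x]
    simp [fromBlocks_mulVec, dotProduct]
  rw [hquad]
  by_cases hl : x ∘ Sum.inl = 0
  · have hr : x ∘ Sum.inr ≠ 0 := fun hr =>
      hx (by ext (i | i); exacts [congrFun hl i, congrFun hr i])
    simpa [hl] using hB.dotProduct_mulVec_pos hr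
  · exact add_pos_of_pos_of_nonneg (hA.dotProduct_mulVec_pos hl)
      (hB.posSemidef.dotProduct_mulVec_nonneg _)

section Latent

variable {n : ℕ} {K D : Matrix (Fin n) (Fin n) ℝ}

/-- `(y, z) = L (y, ε)` with `L = [[1, 0], [1, 1]]`, and `(y, ε)` has covariance `diag(K, D)`. -/
lemma latentCov_eq_mul_mul_star :
    latentCov K D = fromBlocks 1 0 1 1 * fromBlocks K 0 0 D * star (fromBlocks 1 0 1 1) := by
  simp [latentCov, star_eq_conjTranspose, fromBlocks_transpose, fromBlocks_multiply]

lemma latentCov_posDef (hK : K.PosDef) (hD : D.PosDef) : (latentCov K D).PosDef := by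
  have hL : IsUnit (fromBlocks 1 0 1 1 : Matrix (Fin n ⊕ Fin n) (Fin n ⊕ Fin n) ℝ) :=
    (isUnit_iff_isUnit_det _).mpr (by simp)
  rw [latentCov_eq_mul_mul_star]
  exact hL.posDef_star_right_conjugate_iff.mpr (hK.fromBlocks_zero hD)

lemma latentCov_apply_inr_right (hD : D.IsDiag) (j : Fin n) {v : Fin n ⊕ Fin n}
    (hv : v ≠ Sum.inr j) : latentCov K D v (Sum.inr j) = latentCov K D v (Sum.inl j) := by
  rcases v with i | i
  · rfl
  · simp [latentCov, hD (fun h => hv (congrArg Sum.inr h))]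

lemma latentCov_inr_apply (hD : D.IsDiag) (j : Fin n) {w : Fin n ⊕ Fin n}
    (hw : w ≠ Sum.inr j) : latentCov K D (Sum.inr j) w = latentCov K D (Sum.inl j) w := by
  rcases w with i | i
  · rfl
  · simp [latentCov, hD (fun h => hw (congrArg Sum.inr h.symm))]

end Latent

/-- **Conditional independence of a response given its latent variable.** In the latent
Gaussian model, `z j` is conditionally independent of every other component of `(y, z)`
given `y j` (zero partial covariance), and consequently conditioning any component `w ≠ z j`
on `(x_G, y j)` is the same as conditioning on `(x_G, y j, z j)`: both the conditional
variance and the conditional mean are unchanged. -/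
theorem response_conditionally_independent_given_latent
    {n : ℕ} (K D : Matrix (Fin n) (Fin n) ℝ) (hK : K.PosDef)
    (hDdiag : ∀ i j, i ≠ j → D i j = 0) (hDpos : ∀ i, 0 < D i i)
    (j : Fin n) :
    (∀ w : Fin n ⊕ Fin n, w ≠ Sum.inr j →
        condCov (latentCov K D) (Sum.inr j) w {Sum.inl j} = 0) ∧
      ∀ w : Fin n ⊕ Fin n, w ≠ Sum.inr j → ∀ G : Finset (Fin n ⊕ Fin n), w ∉ G →
        condVar (latentCov K D) w (insert (Sum.inl j) G) =
            condVar (latentCov K D) w (insert (Sum.inr j) (insert (Sum.inl j) G)) ∧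
          ∀ x : Fin n ⊕ Fin n → ℝ,
            condMean 0 (latentCov K D) w (insert (Sum.inl j) G) x =
              condMean 0 (latentCov K D) w (insert (Sum.inr j) (insert (Sum.inl j) G)) x := by
  have hDiag : D.IsDiag := fun i k h => hDdiag i k h
  have hS : (latentCov K D).PosDef :=
    latentCov_posDef hK (hDiag.diagonal_diag ▸ posDef_diagonal_iff.mpr hDpos)
  have hcol : ∀ v ≠ Sum.inr j, latentCov K D v (Sum.inr j) = latentCov K D v (Sum.inl j) :=
    fun _ => latentCov_apply_inr_right hDiag j
  refine ⟨fun w hw => ?_, fun w hw G _ => ⟨?_, fun x => ?_⟩⟩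
  · rw [condCov_singleton, latentCov_inr_apply hDiag j hw]
    simp [latentCov, hK.diag_pos.ne']
  · exact (condVar_insert_eq hS (mem_insert_self _ G) hcol hw).symm
  · exact (condMean_insert_eq hS (mem_insert_self _ G) hcol hw x).symm
end
end

section
/- In the latent Gaussian model, let f̂ be a Vecchia approximation of x = (z_o, y_o, y_p) in which no y_p-variable conditions on any y_o-variable and no z_o-variable or y_o-variable conditions on any y_p-variable (as in RF-stand and RF-ind). Then ∫ f̂(x) dy_o = f̃(z_o, y_p), where f̃ is the Vecchia approximation of the reduced vector (z_o, y_p) obtained with the same conditioning sets (y_o removed from x); consequently, the implied Vecchia conditional f̂(y_p | z_o) coincides with the conditional f̃(y_p | z_o) from the reduced approximation. (Lemma used in the proof of Proposition 2, part 5, and underlying the computational simplification of RF-stand.) -/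
open MeasureTheory Real Finset Matrix

noncomputable section

variable {ι : Type*} [Fintype ι] [DecidableEq ι]

/-! ### The latent model, Vecchia vector `x = (z_o, y_o, y_p)`

`Sum.inl j` (for `j : ↥o`) indexes the observed response `z j`, and `Sum.inr i`
(for `i : Fin n`) indexes the latent variable `y i`; the latent block is split into `y_o`
(indices in `o`) and `y_p` (indices in `p = oᶜ`). -/

/-- Covariance matrix of `x = (z_o, y)` for the latent model `y ~ N(0,K)`, `z = y + ε`,
`ε ~ N(0,D)` independent of `y`. -/
def rfCov {n : ℕ} (K D : Matrix (Fin n) (Fin n) ℝ) (o : Finset (Fin n)) :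
    Matrix (↥o ⊕ Fin n) (↥o ⊕ Fin n) ℝ :=
  Matrix.fromBlocks
    (Matrix.of fun j k => (K + D) j.1 k.1)
    (Matrix.of fun j i => K j.1 i)
    (Matrix.of fun i j => K i j.1)
    K

/-- The Vecchia approximation `f̃` of the reduced vector `(z_o, y_p)` (with `y_o` removed),
with the same conditioning sets: the product of the conditional densities of the
`z_o`-variables and of the `y_p`-variables. -/
def vecchiaReduced {n : ℕ} (K D : Matrix (Fin n) (Fin n) ℝ) (o : Finset (Fin n))
    (g : ↥o ⊕ Fin n → Finset (↥o ⊕ Fin n)) (x : ↥o ⊕ Fin n → ℝ) : ℝ :=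
  (∏ j : ↥o, condDens 0 (rfCov K D o) (Sum.inl j) (g (Sum.inl j)) x) *
    ∏ i ∈ oᶜ, condDens 0 (rfCov K D o) (Sum.inr i) (g (Sum.inr i)) x

/-! Since no `z`- or `y_p`-factor of `f̂` conditions on a `y_o`-variable,
`f̂ = f̃ · ∏_{i ∈ o} f(y_i | ·)` with `f̃` constant in `y_o`. The `y_o`-factors form a triangular product of Gaussian conditional
densities: integrating out the `y_o`-variables from the last one down, each factor integrates to
one, so `∫ f̂ dy_o = f̃`. Integrating the remaining `y_p`-variables afterwards (Tonelli for iterated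
marginals) identifies the normalizing constants of the two conditionals. -/

open Function

section Marginal

variable {δ : Type*} [DecidableEq δ] {X : δ → Type*} [∀ i, MeasurableSpace (X i)]
  {μ : ∀ i, Measure (X i)}

lemma lmarginal_mul_left {s : Finset δ} {F H : (∀ i, X i) → ENNReal} (hF : Measurable F)
    (hH : ∀ x y, (∀ i ∉ s, x i = y i) → H x = H y) :
    ∫⋯∫⁻_s, (fun x => H x * F x) ∂μ = fun x => H x * (∫⋯∫⁻_s, F ∂μ) x := by
  ext x
  have hHx : ∀ y, H (updateFinset x s y) = H x := fun y =>
    hH _ _ fun i hi => by simp [updateFinset, hi]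
  simp only [lmarginal, hHx]
  exact lintegral_const_mul _ (hF.comp measurable_updateFinset)

lemma lmarginal_prod_eq_one [LinearOrder δ] [∀ i, SigmaFinite (μ i)] (s : Finset δ)
    (f : δ → (∀ i, X i) → ENNReal) (hf : ∀ i ∈ s, Measurable (f i))
    (hdep : ∀ i ∈ s, ∀ j ∈ s, i < j → ∀ x t, f i (update x j t) = f i x)
    (hnorm : ∀ i ∈ s, ∀ x, ∫⁻ t, f i (update x i t) ∂μ i = 1) :
    ∫⋯∫⁻_s, (fun x => ∏ i ∈ s, f i x) ∂μ = 1 := by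
  induction s using Finset.induction_on_max with
  | empty => simp only [Finset.prod_empty, lmarginal_empty]; rfl
  | insert a s hlt ih =>
    have has : a ∉ s := fun h => lt_irrefl a (hlt a h)
    have hmeas : Measurable fun x => ∏ i ∈ insert a s, f i x :=
      Finset.measurable_prod _ hf
    rw [lmarginal_insert' _ hmeas has]
    have hinner : ∀ x, ∫⁻ t, ∏ i ∈ insert a s, f i (update x a t) ∂μ a = ∏ i ∈ s, f i x := by
      intro x
      have hrest : ∀ t, ∏ i ∈ s, f i (update x a t) = ∏ i ∈ s, f i x := fun t =>
        Finset.prod_congr rfl fun i hi =>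
          hdep i (mem_insert_of_mem hi) a (mem_insert_self a s) (hlt i hi) x t
      simp only [Finset.prod_insert has, hrest]
      rw [lintegral_mul_const (f := fun t => f a (update x a t)) _
          ((hf a (mem_insert_self a s)).comp (measurable_update x)),
        hnorm a (mem_insert_self a s) x, one_mul]
    simp only [hinner]
    exact ih (fun i hi => hf i (mem_insert_of_mem hi))
      (fun i hi j hj => hdep i (mem_insert_of_mem hi) j (mem_insert_of_mem hj))
      (fun i hi => hnorm i (mem_insert_of_mem hi))

end Marginal

section Integral

variable {δ : Type*} [DecidableEq δ] {F : (δ → ℝ) → ℝ}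

lemma integral_updateFinset_eq_toReal_lmarginal (hF₀ : ∀ x, 0 ≤ F x) (hF : Measurable F)
    (s : Finset δ) (x : δ → ℝ) :
    ∫ w : ↥s → ℝ, F (updateFinset x s w) =
      ((∫⋯∫⁻_s, (fun y => ENNReal.ofReal (F y)) ∂fun _ => volume) x).toReal :=
  integral_eq_lintegral_of_nonneg_ae (ae_of_all _ fun _ => hF₀ _)
    (hF.comp measurable_updateFinset).aestronglyMeasurable

lemma integral_eq_toReal_lmarginal_univ [Fintype δ] (hF₀ : ∀ x, 0 ≤ F x) (hF : Measurable F)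
    (x : δ → ℝ) :
    ∫ y, F y = ((∫⋯∫⁻_univ, (fun y => ENNReal.ofReal (F y)) ∂fun _ => volume) x).toReal := by
  rw [integral_eq_lintegral_of_nonneg_ae (ae_of_all _ hF₀) hF.aestronglyMeasurable,
    ← lintegral_eq_lmarginal_univ]
  rfl

@[fun_prop]
lemma measurable_sumElim_right {α β γ : Type*} [MeasurableSpace γ] (z : α → γ) :
    Measurable fun y : β → γ => Sum.elim z y :=
  measurable_pi_lambda _ fun c => by
    cases c
    · exact measurable_const
    · exact measurable_pi_apply _

end Integral

section Gaussian

variable {α : Type*} [DecidableEq α]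

lemma gauss1_nonneg (μ v t : ℝ) : 0 ≤ gauss1 μ v t := by
  unfold gauss1; positivity

lemma lintegral_gauss1 (μ : ℝ) {v : ℝ} (hv : 0 < v) :
    ∫⁻ t, ENNReal.ofReal (gauss1 μ v t) = 1 := by
  have hpdf : ∀ t, gauss1 μ v t = ProbabilityTheory.gaussianPDFReal μ v.toNNReal t := fun t => by
    rw [ProbabilityTheory.gaussianPDFReal, Real.coe_toNNReal v hv.le, gauss1]
  simp_rw [hpdf]
  exact ProbabilityTheory.lintegral_gaussianPDFReal_eq_one μ (by simpa using hv)

lemma condDens_nonneg (μ : α → ℝ) (M : Matrix α α ℝ) (i : α) (G : Finset α) (x : α → ℝ) :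
    0 ≤ condDens μ M i G x :=
  gauss1_nonneg _ _ _

@[fun_prop]
lemma measurable_condDens (μ : α → ℝ) (M : Matrix α α ℝ) (i : α) (G : Finset α) :
    Measurable (condDens μ M i G) := by
  unfold condDens gauss1 condMean
  fun_prop

lemma condDens_congr (μ : α → ℝ) (M : Matrix α α ℝ) (i : α) (G : Finset α) {x x' : α → ℝ}
    (hG : ∀ j ∈ G, x j = x' j) (hi : x i = x' i) :
    condDens μ M i G x = condDens μ M i G x' := by
  have hmean : condMean μ M i G x = condMean μ M i G x' := by
    unfold condMean
    congr 3
    exact funext fun j => by rw [hG j.1 j.2]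
  rw [condDens, condDens, hmean, hi]

lemma condVar_pos_s13 {M : Matrix α α ℝ} (hM : M.PosDef) {i : α} {G : Finset α} (hi : i ∉ G) :
    0 < condVar M i G := by
  let e : G ⊕ Unit → α := Sum.elim Subtype.val fun _ => i
  have he : Injective e := by
    rintro (a | a) (b | b) h
    · exact congrArg Sum.inl (Subtype.ext h)
    · exact absurd (show a.1 = i from h) (ne_of_mem_of_not_mem a.2 hi)
    · exact absurd (show i = b.1 from h) (ne_of_mem_of_not_mem b.2 hi).symm
    · rfl
  have hA : (subm M G).PosDef := hM.submatrix Subtype.val_injective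
  let := hA.isUnit.invertible
  have hblocks : M.submatrix e e = fromBlocks (subm M G) (of fun j _ => M j i)
      (of fun _ k => M i k) (of fun _ _ => M i i) := by
    ext (a | a) (b | b) <;> rfl
  have hdet := (hM.submatrix he).det_pos
  rw [hblocks, det_fromBlocks₁₁, invOf_eq_nonsing_inv, det_unique (n := Unit)] at hdet
  refine (pos_of_mul_pos_right hdet hA.det_pos.le).trans_eq ?_
  simp only [condVar, dotProduct, mulVec, Matrix.sub_apply, mul_apply, of_apply, Finset.sum_mul,
    Finset.mul_sum, mul_assoc]
  rw [Finset.sum_comm]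

lemma lintegral_condDens_update {M : Matrix α α ℝ} (hM : M.PosDef) (μ : α → ℝ) {i : α}
    {G : Finset α} (hi : i ∉ G) (x : α → ℝ) :
    ∫⁻ t, ENNReal.ofReal (condDens μ M i G (update x i t)) = 1 := by
  have hmean : ∀ t, condMean μ M i G (update x i t) = condMean μ M i G x := fun t => by
    unfold condMean
    congr 3
    exact funext fun j => by rw [update_of_ne (ne_of_mem_of_not_mem j.2 hi)]
  simp only [condDens, hmean, update_self]
  exact lintegral_gauss1 _ (condVar_pos_s13 hM hi)

lemma vecchia_nonneg (μ : α → ℝ) (M : Matrix α α ℝ) (g : α → Finset α) [Fintype α]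
    (x : α → ℝ) : 0 ≤ vecchia μ M g x :=
  prod_nonneg fun _ _ => condDens_nonneg ..

@[fun_prop]
lemma measurable_vecchia (μ : α → ℝ) (M : Matrix α α ℝ) (g : α → Finset α) [Fintype α] :
    Measurable (vecchia μ M g) :=
  Finset.measurable_prod _ fun _ _ => measurable_condDens ..

end Gaussian

section LatentModel

variable {n : ℕ} {K D : Matrix (Fin n) (Fin n) ℝ} {o : Finset (Fin n)}
  {g : ↥o ⊕ Fin n → Finset (↥o ⊕ Fin n)}

lemma rfCov_posDef (hK : K.PosDef) (hDdiag : ∀ i j, i ≠ j → D i j = 0)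
    (hDpos : ∀ i, 0 < D i i) : (rfCov K D o).PosDef := by
  let := hK.isUnit.invertible
  let B : Matrix o (Fin n) ℝ := K.submatrix Subtype.val id
  have hBH : Bᴴ = K.submatrix id Subtype.val := by
    rw [conjTranspose_submatrix, hK.1.eq]
  have hblocks : rfCov K D o = fromBlocks (of fun j k => (K + D) j.1 k.1) B Bᴴ K := by
    rw [hBH]; rfl
  have hschur : (of fun j k : o => (K + D) j.1 k.1) - B * K⁻¹ * Bᴴ =
      diagonal fun j => D j.1 j.1 := by
    rw [hBH, ← submatrix_id_id K⁻¹, ← submatrix_mul _ _ _ _ _ bijective_id,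
      ← submatrix_mul _ _ _ _ _ bijective_id, mul_nonsing_inv _ hK.det_pos.ne'.isUnit,
      Matrix.one_mul]
    ext j k
    by_cases hjk : j = k
    · simp [hjk]
    · simp [hjk, hDdiag _ _ (Subtype.coe_ne_coe.mpr hjk)]
  have hpsd : (rfCov K D o).PosSemidef := by
    rw [hblocks, PosDef.fromBlocks₂₂ _ _ hK, hschur]
    exact PosSemidef.diagonal fun j => (hDpos j.1).le
  refine hpsd.posDef_iff_det_ne_zero.mpr ?_
  rw [hblocks, det_fromBlocks₂₂, invOf_eq_nonsing_inv, hschur]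
  exact mul_ne_zero hK.det_pos.ne' (PosDef.diagonal fun j : o => hDpos j.1).det_pos.ne'

lemma vecchia_rfCov_eq_vecchiaReduced_mul (x : ↥o ⊕ Fin n → ℝ) :
    vecchia 0 (rfCov K D o) g x = vecchiaReduced K D o g x *
      ∏ i ∈ o, condDens 0 (rfCov K D o) (Sum.inr i) (g (Sum.inr i)) x := by
  rw [vecchia, vecchiaReduced, Fintype.prod_sum_type, ← prod_mul_prod_compl o]
  ring

lemma vecchiaReduced_nonneg (x : ↥o ⊕ Fin n → ℝ) : 0 ≤ vecchiaReduced K D o g x :=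
  mul_nonneg (prod_nonneg fun _ _ => condDens_nonneg ..) (prod_nonneg fun _ _ => condDens_nonneg ..)

lemma vecchiaReduced_congr
    (hzc : ∀ j : ↥o, ∀ w ∈ g (Sum.inl j), ∃ k : ↥o, w = Sum.inl k ∧ k.1 < j.1)
    (hyp : ∀ i : Fin n, i ∉ o → ∀ w ∈ g (Sum.inr i),
      (∃ k, w = Sum.inl k) ∨ ∃ j, w = Sum.inr j ∧ j ∉ o ∧ j < i)
    (z : ↥o → ℝ) {y y' : Fin n → ℝ} (h : ∀ i ∉ o, y i = y' i) :
    vecchiaReduced K D o g (Sum.elim z y) = vecchiaReduced K D o g (Sum.elim z y') := by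
  refine congrArg₂ (· * ·) (prod_congr rfl fun j _ => ?_) (prod_congr rfl fun i hi => ?_)
  · refine condDens_congr _ _ _ _ (fun u hu => ?_) rfl
    obtain ⟨k, rfl, -⟩ := hzc j u hu
    rfl
  · have hi : i ∉ o := mem_compl.mp hi
    refine condDens_congr _ _ _ _ (fun u hu => ?_) (h i hi)
    rcases hyp i hi u hu with ⟨k, rfl⟩ | ⟨k, rfl, hk, -⟩
    · rfl
    · exact h k hk

lemma lmarginal_prod_condDens_eq_one {M : Matrix (↥o ⊕ Fin n) (↥o ⊕ Fin n) ℝ} (hM : M.PosDef)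
    (hyo : ∀ i : Fin n, i ∈ o → ∀ w ∈ g (Sum.inr i),
      (∃ k, w = Sum.inl k) ∨ ∃ j, w = Sum.inr j ∧ j ∈ o ∧ j < i)
    (z : ↥o → ℝ) :
    (∫⋯∫⁻_o, (fun y => ∏ i ∈ o,
      ENNReal.ofReal (condDens 0 M (Sum.inr i) (g (Sum.inr i)) (Sum.elim z y))) ∂fun _ => volume)
      = 1 := by
  refine lmarginal_prod_eq_one o _ (fun i _ => by fun_prop) (fun i hi j _ hij y t => ?_)
    (fun i hi y => ?_)
  · rw [Sum.elim_update_right]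
    refine congrArg ENNReal.ofReal (condDens_congr _ _ _ _ (fun u hu => ?_)
      (update_of_ne (Sum.inr_injective.ne hij.ne) _ _))
    rcases hyo i hi u hu with ⟨k, rfl⟩ | ⟨k, rfl, -, hk⟩
    · exact update_of_ne Sum.inl_ne_inr _ _
    · exact update_of_ne (Sum.inr_injective.ne (hk.trans hij).ne) _ _
  · have hself : Sum.inr i ∉ g (Sum.inr i) := fun hmem => by
      rcases hyo i hi _ hmem with ⟨k, hk⟩ | ⟨k, hk, -, hlt⟩
      · exact Sum.inr_ne_inl hk
      · exact (Sum.inr_injective hk ▸ hlt).false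
    simp_rw [Sum.elim_update_right]
    exact lintegral_condDens_update hM 0 hself _

lemma lmarginal_vecchia_eq_vecchiaReduced (hK : K.PosDef) (hDdiag : ∀ i j, i ≠ j → D i j = 0)
    (hDpos : ∀ i, 0 < D i i)
    (hzc : ∀ j : ↥o, ∀ w ∈ g (Sum.inl j), ∃ k : ↥o, w = Sum.inl k ∧ k.1 < j.1)
    (hyo : ∀ i : Fin n, i ∈ o → ∀ w ∈ g (Sum.inr i),
      (∃ k, w = Sum.inl k) ∨ ∃ j, w = Sum.inr j ∧ j ∈ o ∧ j < i)
    (hyp : ∀ i : Fin n, i ∉ o → ∀ w ∈ g (Sum.inr i),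
      (∃ k, w = Sum.inl k) ∨ ∃ j, w = Sum.inr j ∧ j ∉ o ∧ j < i)
    (z : ↥o → ℝ) :
    (∫⋯∫⁻_o, (fun y => ENNReal.ofReal (vecchia 0 (rfCov K D o) g (Sum.elim z y)))
      ∂fun _ => volume) = fun y => ENNReal.ofReal (vecchiaReduced K D o g (Sum.elim z y)) := by
  simp_rw [vecchia_rfCov_eq_vecchiaReduced_mul, ENNReal.ofReal_mul (vecchiaReduced_nonneg _),
    ENNReal.ofReal_prod_of_nonneg fun _ _ => condDens_nonneg ..]
  rw [lmarginal_mul_left (by fun_prop) fun y y' h =>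
    congrArg _ (vecchiaReduced_congr hzc hyp z h),
    lmarginal_prod_condDens_eq_one (rfCov_posDef hK hDdiag hDpos) hyo z]
  simp

end LatentModel

/-- **Marginalizing `y_o` out of an RF-stand/RF-ind–type Vecchia approximation.**
If no `y_p`-variable conditions on a `y_o`-variable and no `z_o`- or `y_o`-variable
conditions on a `y_p`-variable, then `∫ f̂(x) dy_o = f̃(z_o, y_p)`, the Vecchia approximation
of the reduced vector `(z_o, y_p)` with the same conditioning sets (in particular the
right-hand side does not depend on the `y_o`-coordinates of its argument); consequently the
implied conditionals satisfy `f̂(y_p | z_o) = f̃(y_p | z_o)`. -/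
theorem vecchia_marginalize_latent_observed
    {n : ℕ} (K D : Matrix (Fin n) (Fin n) ℝ)
    (hK : K.PosDef) (hDdiag : ∀ i j, i ≠ j → D i j = 0) (hDpos : ∀ i, 0 < D i i)
    (o : Finset (Fin n))
    (g : ↥o ⊕ Fin n → Finset (↥o ⊕ Fin n))
    -- `x`-ordering: each `z j` conditions only on previously ordered responses
    (hzc : ∀ j : ↥o, ∀ w ∈ g (Sum.inl j), ∃ k : ↥o, w = Sum.inl k ∧ k.1 < j.1)
    -- each `y i`, `i ∈ o`, conditions on responses and earlier `y_o`-variables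
    -- (in particular not on any `y_p`-variable)
    (hyo : ∀ i : Fin n, i ∈ o → ∀ w ∈ g (Sum.inr i),
      (∃ k, w = Sum.inl k) ∨ ∃ j, w = Sum.inr j ∧ j ∈ o ∧ j < i)
    -- each `y i`, `i ∈ p`, conditions on responses and earlier `y_p`-variables
    -- (in particular not on any `y_o`-variable)
    (hyp : ∀ i : Fin n, i ∉ o → ∀ w ∈ g (Sum.inr i),
      (∃ k, w = Sum.inl k) ∨ ∃ j, w = Sum.inr j ∧ j ∉ o ∧ j < i) :
    (∀ (zv : ↥o → ℝ) (yv yv' : Fin n → ℝ), (∀ i, i ∉ o → yv i = yv' i) →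
        (∫ w : ↥o → ℝ,
            vecchia 0 (rfCov K D o) g
              (Sum.elim zv fun i => if h : i ∈ o then w ⟨i, h⟩ else yv i)) =
          vecchiaReduced K D o g (Sum.elim zv yv')) ∧
      ∀ (zv : ↥o → ℝ) (yv : Fin n → ℝ),
        (∫ w : ↥o → ℝ,
            vecchia 0 (rfCov K D o) g
              (Sum.elim zv fun i => if h : i ∈ o then w ⟨i, h⟩ else yv i)) /
            (∫ yw : Fin n → ℝ, vecchia 0 (rfCov K D o) g (Sum.elim zv yw)) =
          vecchiaReduced K D o g (Sum.elim zv yv) /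
            ∫ v : ↥(oᶜ) → ℝ,
              vecchiaReduced K D o g
                (Sum.elim zv fun i => if h : i ∈ oᶜ then v ⟨i, h⟩ else yv i) := by
  have hmarg := lmarginal_vecchia_eq_vecchiaReduced hK hDdiag hDpos hzc hyo hyp
  -- `updateFinset x s w` unfolds to the `if h : i ∈ s then w ⟨i, h⟩ else x i` of the statement.
  have hnum : ∀ zv yv,
      ∫ w : ↥o → ℝ, vecchia 0 (rfCov K D o) g (Sum.elim zv (updateFinset yv o w)) =
        vecchiaReduced K D o g (Sum.elim zv yv) := fun zv yv => by
    rw [integral_updateFinset_eq_toReal_lmarginal (fun _ => vecchia_nonneg ..) (by fun_prop),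
      hmarg, ENNReal.toReal_ofReal (vecchiaReduced_nonneg _)]
  have hden : ∀ zv yv, ∫ y, vecchia 0 (rfCov K D o) g (Sum.elim zv y) =
      ∫ v : ↥oᶜ → ℝ, vecchiaReduced K D o g (Sum.elim zv (updateFinset yv oᶜ v)) := fun zv yv => by
    rw [integral_eq_toReal_lmarginal_univ (fun _ => vecchia_nonneg ..) (by fun_prop) yv,
      ← union_compl o, lmarginal_union' _ _ (by fun_prop) disjoint_compl_right, hmarg,
      integral_updateFinset_eq_toReal_lmarginal (fun _ => vecchiaReduced_nonneg _)
      (by unfold vecchiaReduced; fun_prop)]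
  exact ⟨fun zv yv yv' h => (hnum zv yv).trans (vecchiaReduced_congr hzc hyp zv h),
    fun zv yv => congrArg₂ (· / ·) (hnum zv yv) (hden zv yv)⟩

end
end

section
/- Let U be an upper triangular matrix with positive diagonal entries, partitioned conformably with an ordered index partition (o, p, r) as U = [[U_{oo}, U_{op}, U_{or}],[0, U_{pp}, 0],[0, 0, U_{rr}]] (so the (p,r) block of U is zero). Let Q = U U', let ℓ = (o, p), and let W = Q_{ℓℓ}. Then W = [[U_{oo}U_{oo}' + U_{op}U_{op}' + U_{or}U_{or}', U_{op}U_{pp}'],[U_{pp}U_{op}', U_{pp}U_{pp}']], and the reverse Cholesky factor of W is rchol(W) = [[V_{oo}, U_{op}],[0, U_{pp}]], where V_{oo} = rchol(U_{oo}U_{oo}' + U_{or}U_{or}'). (Equation (8) of the paper: under latent-first ordering with the observed–prediction restriction, the last block-columns of rchol(W) can be copied directly from U.) -/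
open Matrix

noncomputable section

/-- Uniqueness of the "reverse Cholesky" factor on `Fin n`. -/
lemma rchol_unique_fin {n : ℕ} (A B : Matrix (Fin n) (Fin n) ℝ)
    (hA : A.BlockTriangular id) (hApos : ∀ i, 0 < A i i)
    (hB : B.BlockTriangular id) (hBpos : ∀ i, 0 < B i i)
    (h : A * Aᵀ = B * Bᵀ) : A = B := by
  have hAdet : IsUnit A.det := by
    rw [Matrix.det_of_upperTriangular hA]
    exact isUnit_iff_ne_zero.mpr (Finset.prod_pos (fun i _ => hApos i)).ne'
  have hBdet : IsUnit B.det := by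
    rw [Matrix.det_of_upperTriangular hB]
    exact isUnit_iff_ne_zero.mpr (Finset.prod_pos (fun i _ => hBpos i)).ne'
  have hATdet : IsUnit Aᵀ.det := by rwa [Matrix.det_transpose]
  haveI : Invertible A := A.invertibleOfIsUnitDet hAdet
  haveI : Invertible B := B.invertibleOfIsUnitDet hBdet
  haveI : Invertible Aᵀ := Aᵀ.invertibleOfIsUnitDet hATdet
  set D := B⁻¹ * A with hDdef
  have key : B * D = A := by
    rw [hDdef, ← Matrix.mul_assoc, Matrix.mul_nonsing_inv B hBdet, Matrix.one_mul]
  have hD1 : D.BlockTriangular id :=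
    (blockTriangular_inv_of_blockTriangular hB).mul hA
  have hEq2 : D = Bᵀ * (Aᵀ)⁻¹ := by
    have h1 : B⁻¹ * (A * Aᵀ) = Bᵀ := by
      rw [h, ← Matrix.mul_assoc, Matrix.nonsing_inv_mul B hBdet, Matrix.one_mul]
    have h2 : B⁻¹ * (A * Aᵀ) * (Aᵀ)⁻¹ = Bᵀ * (Aᵀ)⁻¹ := by rw [h1]
    rw [← h2, Matrix.mul_assoc B⁻¹, Matrix.mul_assoc A, Matrix.mul_nonsing_inv Aᵀ hATdet,
      Matrix.mul_one]
  have hD2 : D.BlockTriangular (OrderDual.toDual ∘ id) := by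
    rw [hEq2]
    exact hB.transpose.mul (blockTriangular_inv_of_blockTriangular hA.transpose)
  have hDoff : ∀ i j, i ≠ j → D i j = 0 := by
    intro i j hij
    rcases lt_or_gt_of_ne hij with hlt | hgt
    · exact hD2 (by simpa using hlt)
    · exact hD1 hgt
  have hDdiagmat : D = Matrix.diagonal (fun i => D i i) := by
    ext i j
    by_cases hij : i = j
    · subst hij; simp
    · rw [Matrix.diagonal_apply_ne _ hij]; exact hDoff i j hij
  have hDpos : ∀ i, 0 < D i i := by
    intro i
    have hAi : A i i = B i i * D i i := by
      conv_lhs => rw [← key, hDdiagmat]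
      rw [Matrix.mul_diagonal]
    nlinarith [hApos i, hBpos i, hAi]
  have hDDt : D * Dᵀ = 1 := by
    have hBDB : B * (D * Dᵀ) * Bᵀ = B * Bᵀ := by
      calc B * (D * Dᵀ) * Bᵀ = (B * D) * (B * D)ᵀ := by
            simp only [Matrix.transpose_mul, Matrix.mul_assoc]
        _ = A * Aᵀ := by rw [key]
        _ = B * Bᵀ := h
    have hBTdet : IsUnit Bᵀ.det := by rwa [Matrix.det_transpose]
    haveI : Invertible Bᵀ := Bᵀ.invertibleOfIsUnitDet hBTdet
    have h1 : D * Dᵀ * Bᵀ = Bᵀ := by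
      apply (isUnit_of_invertible B).mul_left_cancel
      rw [← Matrix.mul_assoc, hBDB]
    have h2 : D * Dᵀ * Bᵀ = 1 * Bᵀ := by rw [Matrix.one_mul, h1]
    exact (isUnit_of_invertible Bᵀ).mul_right_cancel h2
  have hDone : ∀ i, D i i = 1 := by
    intro i
    have : (D * Dᵀ) i i = 1 := by rw [hDDt]; simp
    rw [hDdiagmat] at this
    simp [Matrix.diagonal_transpose, Matrix.diagonal_mul_diagonal] at this
    nlinarith [hDpos i]
  have : D = 1 := by
    rw [hDdiagmat]
    have : (fun i => D i i) = fun _ => (1 : ℝ) := funext hDone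
    rw [this, Matrix.diagonal_one]
  rw [← key, this, Matrix.mul_one]

/-- Transport of triangularity through `finSumFinEquiv`. -/
lemma tri_submatrix {no np : ℕ} (M : Matrix (Fin no ⊕ Fin np) (Fin no ⊕ Fin np) ℝ)
    (h1 : ∀ i j : Fin no, j < i → M (Sum.inl i) (Sum.inl j) = 0)
    (h2 : ∀ (i : Fin np) (j : Fin no), M (Sum.inr i) (Sum.inl j) = 0)
    (h3 : ∀ i j : Fin np, j < i → M (Sum.inr i) (Sum.inr j) = 0) :
    (M.submatrix finSumFinEquiv.symm finSumFinEquiv.symm).BlockTriangular id := by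
  intro i j hij
  simp only [Matrix.submatrix_apply]
  set x := finSumFinEquiv.symm i with hx
  set y := finSumFinEquiv.symm j with hy
  have hi : i = finSumFinEquiv x := by rw [hx, Equiv.apply_symm_apply]
  have hj : j = finSumFinEquiv y := by rw [hy, Equiv.apply_symm_apply]
  rw [hi, hj] at hij
  rcases x with a | a <;> rcases y with b | b <;>
    simp only [finSumFinEquiv_apply_left, finSumFinEquiv_apply_right] at hij
  · have hv := Fin.lt_def.mp hij
    simp only [id_eq, Fin.coe_castAdd] at hv
    exact h1 a b (Fin.lt_def.mpr hv)
  · exfalso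
    have hv := Fin.lt_def.mp hij
    simp only [id_eq, Fin.coe_castAdd, Fin.coe_natAdd] at hv
    omega
  · exact h2 a b
  · have hv := Fin.lt_def.mp hij
    simp only [id_eq, Fin.coe_natAdd] at hv
    exact h3 a b (Fin.lt_def.mpr (by omega))

/-- Uniqueness of the reverse Cholesky factor, on a `Sum` index. -/
lemma rchol_unique_sum {no np : ℕ} (A B : Matrix (Fin no ⊕ Fin np) (Fin no ⊕ Fin np) ℝ)
    (hA1 : ∀ i j : Fin no, j < i → A (Sum.inl i) (Sum.inl j) = 0)
    (hA2 : ∀ (i : Fin np) (j : Fin no), A (Sum.inr i) (Sum.inl j) = 0)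
    (hA3 : ∀ i j : Fin np, j < i → A (Sum.inr i) (Sum.inr j) = 0)
    (hA4 : ∀ i, 0 < A (Sum.inl i) (Sum.inl i)) (hA5 : ∀ i, 0 < A (Sum.inr i) (Sum.inr i))
    (hB1 : ∀ i j : Fin no, j < i → B (Sum.inl i) (Sum.inl j) = 0)
    (hB2 : ∀ (i : Fin np) (j : Fin no), B (Sum.inr i) (Sum.inl j) = 0)
    (hB3 : ∀ i j : Fin np, j < i → B (Sum.inr i) (Sum.inr j) = 0)
    (hB4 : ∀ i, 0 < B (Sum.inl i) (Sum.inl i)) (hB5 : ∀ i, 0 < B (Sum.inr i) (Sum.inr i))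
    (h : A * Aᵀ = B * Bᵀ) : A = B := by
  set e := (finSumFinEquiv (m := no) (n := np))
  have hpos : ∀ (M : Matrix (Fin no ⊕ Fin np) (Fin no ⊕ Fin np) ℝ),
      (∀ i, 0 < M (Sum.inl i) (Sum.inl i)) → (∀ i, 0 < M (Sum.inr i) (Sum.inr i)) →
      ∀ i, 0 < (M.submatrix e.symm e.symm) i i := by
    intro M hl hr i
    simp only [Matrix.submatrix_apply]
    rcases hms : e.symm i with a | a
    · exact hl a
    · exact hr a
  have hmain : A.submatrix e.symm e.symm = B.submatrix e.symm e.symm := by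
    apply rchol_unique_fin _ _ (tri_submatrix A hA1 hA2 hA3) (hpos A hA4 hA5)
      (tri_submatrix B hB1 hB2 hB3) (hpos B hB4 hB5)
    rw [Matrix.transpose_submatrix, Matrix.transpose_submatrix,
      Matrix.submatrix_mul_equiv, Matrix.submatrix_mul_equiv, h]
  have hback : ∀ (M : Matrix (Fin no ⊕ Fin np) (Fin no ⊕ Fin np) ℝ),
      (M.submatrix e.symm e.symm).submatrix e e = M := by
    intro M
    rw [Matrix.submatrix_submatrix, Equiv.symm_comp_self, Matrix.submatrix_id_id]
  rw [← hback A, hmain, hback B]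


/-- The matrix `U = [[U_oo, U_op, U_or],[0, U_pp, 0],[0, 0, U_rr]]`, with rows and columns
indexed by `(o ⊕ p) ⊕ r`. -/
def bigU {no np nr : ℕ}
    (Uoo : Matrix (Fin no) (Fin no) ℝ) (Uop : Matrix (Fin no) (Fin np) ℝ)
    (Uor : Matrix (Fin no) (Fin nr) ℝ) (Upp : Matrix (Fin np) (Fin np) ℝ)
    (Urr : Matrix (Fin nr) (Fin nr) ℝ) :
    Matrix ((Fin no ⊕ Fin np) ⊕ Fin nr) ((Fin no ⊕ Fin np) ⊕ Fin nr) ℝ :=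
  Matrix.fromBlocks
    (Matrix.fromBlocks Uoo Uop 0 Upp)
    (Matrix.of fun s k => Sum.elim (fun j => Uor j k) (fun _ => (0 : ℝ)) s)
    0 Urr

/-- **Equation (8) of the paper: latent-first ordering with the observed–prediction
restriction.** With `Q = U Uᵀ`, `ℓ = (o, p)` and `W = Q_{ℓℓ}`, the matrix `W` has the stated
block form, and its reverse Cholesky factor is `rchol(W) = [[V_oo, U_op],[0, U_pp]]` where
`V_oo = rchol(U_oo U_ooᵀ + U_or U_orᵀ)`; i.e. the prediction block-columns of `rchol(W)` can
be copied directly from `U`. -/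
theorem rchol_posterior_precision_latent_first
    {no np nr : ℕ}
    (Uoo : Matrix (Fin no) (Fin no) ℝ) (Uop : Matrix (Fin no) (Fin np) ℝ)
    (Uor : Matrix (Fin no) (Fin nr) ℝ) (Upp : Matrix (Fin np) (Fin np) ℝ)
    (Urr : Matrix (Fin nr) (Fin nr) ℝ)
    -- `U` is upper triangular with positive diagonal entries:
    (hUoo_tri : ∀ i j : Fin no, j < i → Uoo i j = 0) (hUoo_pos : ∀ i, 0 < Uoo i i)
    (hUpp_tri : ∀ i j : Fin np, j < i → Upp i j = 0) (hUpp_pos : ∀ i, 0 < Upp i i)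
    (hUrr_tri : ∀ i j : Fin nr, j < i → Urr i j = 0) (hUrr_pos : ∀ i, 0 < Urr i i) :
    (bigU Uoo Uop Uor Upp Urr * (bigU Uoo Uop Uor Upp Urr)ᵀ).toBlocks₁₁ =
        Matrix.fromBlocks (Uoo * Uooᵀ + Uop * Uopᵀ + Uor * Uorᵀ) (Uop * Uppᵀ)
          (Upp * Uopᵀ) (Upp * Uppᵀ) ∧
      ∀ Voo : Matrix (Fin no) (Fin no) ℝ,
        (∀ i j : Fin no, j < i → Voo i j = 0) → (∀ i, 0 < Voo i i) →
        Uoo * Uooᵀ + Uor * Uorᵀ = Voo * Vooᵀ →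
        (Matrix.fromBlocks Voo Uop 0 Upp * (Matrix.fromBlocks Voo Uop 0 Upp)ᵀ =
            (bigU Uoo Uop Uor Upp Urr * (bigU Uoo Uop Uor Upp Urr)ᵀ).toBlocks₁₁) ∧
          ∀ V : Matrix (Fin no ⊕ Fin np) (Fin no ⊕ Fin np) ℝ,
            -- `V` is upper triangular w.r.t. the ordering `(o, p)`:
            (∀ i j : Fin no, j < i → V (Sum.inl i) (Sum.inl j) = 0) →
            (∀ (i : Fin np) (j : Fin no), V (Sum.inr i) (Sum.inl j) = 0) →
            (∀ i j : Fin np, j < i → V (Sum.inr i) (Sum.inr j) = 0) →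
            -- with positive diagonal entries:
            (∀ i : Fin no, 0 < V (Sum.inl i) (Sum.inl i)) →
            (∀ i : Fin np, 0 < V (Sum.inr i) (Sum.inr i)) →
            V * Vᵀ = (bigU Uoo Uop Uor Upp Urr * (bigU Uoo Uop Uor Upp Urr)ᵀ).toBlocks₁₁ →
            V = Matrix.fromBlocks Voo Uop 0 Upp := by
  classical
  have hW : (bigU Uoo Uop Uor Upp Urr * (bigU Uoo Uop Uor Upp Urr)ᵀ).toBlocks₁₁ =
      Matrix.fromBlocks (Uoo * Uooᵀ + Uop * Uopᵀ + Uor * Uorᵀ) (Uop * Uppᵀ)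
        (Upp * Uopᵀ) (Upp * Uppᵀ) := by
    ext i j
    rcases i with i | i <;> rcases j with j | j <;>
      simp [bigU, Matrix.toBlocks₁₁, Matrix.mul_apply, Fintype.sum_sum_type,
        Finset.sum_add_distrib, add_assoc]
  refine ⟨hW, ?_⟩
  intro Voo hVoo_tri hVoo_pos hfac
  have hBW : Matrix.fromBlocks Voo Uop 0 Upp * (Matrix.fromBlocks Voo Uop 0 Upp)ᵀ =
      (bigU Uoo Uop Uor Upp Urr * (bigU Uoo Uop Uor Upp Urr)ᵀ).toBlocks₁₁ := by
    rw [hW]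
    rw [Matrix.fromBlocks_transpose, Matrix.fromBlocks_multiply]
    have h11 : Voo * Vooᵀ + Uop * Uopᵀ = Uoo * Uooᵀ + Uop * Uopᵀ + Uor * Uorᵀ := by
      rw [← hfac]; abel
    rw [h11]
    congr 1 <;> simp
  refine ⟨hBW, ?_⟩
  intro V hV1 hV2 hV3 hV4 hV5 hVW
  apply rchol_unique_sum V (Matrix.fromBlocks Voo Uop 0 Upp) hV1 hV2 hV3 hV4 hV5
  · intro i j hij; simpa using hVoo_tri i j hij
  · intro i j; simp
  · intro i j hij; simpa using hUpp_tri i j hij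
  · intro i; simpa using hVoo_pos i
  · intro i; simpa using hUpp_pos i
  · rw [hVW, hBW]


end
end
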